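/- Let r > 0 and n ≥ 1 be an integer. There exists a map 𝔖 from the n-fold cartesian power of M_{≤r} = {Z ∈ M : diam Z ≤ r} into B(5rn) = {Z ∈ M : diam Z = 5rn} such that for all tuples X = (X_1,…,X_n) and Y = (Y_1,…,Y_n) in (M_{≤r})^n one has d_GH(𝔖(X), 𝔖(Y)) = max_{1≤k≤n} d_GH(X_k, Y_k). In particular, (M_{≤r})^n equipped with the ℓ∞ (maximum) product distance embeds isometrically into B(5rn). -/

import Mathlib

/-!
Glue one extra point `p` and the spaces `X₁, …, Xₙ` into a single space, with blocks
ordered `p < X₁ < ⋯ < Xₙ`: two points of different blocks are at a distance `c (max i j)`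
that depends only on the higher block, and the levels `c` of `X₁, …, Xₙ` increase in steps
of `2r` from `(3n + 2) r` to `5rn`, so the diameter is `5rn`, attained between `p` and `Xₙ`.
Gluing optimal couplings of `Xₖ` and `Yₖ` block by block gives
`d_GH(𝔖 X, 𝔖 Y) ≤ maxₖ d_GH(Xₖ, Yₖ)`. Conversely, if `h = d_GH(𝔖 X, 𝔖 Y) < r / 2`, the
nearest-point maps of an optimal coupling are `2h`-isometries; as the levels are `2r` apart
and blocks have diameter at most `r`, they map blocks to blocks through a permutation `σ`
with `max (σ i) (σ j) = max i j`. Such a permutation can only swap `p` with `X₁`, in which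
case `X₁` and `Y₁` both have diameter at most `2h`; otherwise each `Xₖ` is matched with `Yₖ`
and `d_GH(Xₖ, Yₖ) ≤ h`.
-/

open GromovHausdorff Metric Set

universe u

theorem min_le_min_add_min {a b d K : ℝ} (h : a ≤ b + d) (hb : 0 ≤ b) (hd : 0 ≤ d)
    (hK : 0 ≤ K) : min a K ≤ min b K + min d K := by
  simp only [min_def]; split_ifs <;> linarith

theorem IsCompact.exists_dist_le_hausdorffDist {α : Type*} [MetricSpace α] {s t : Set α}
    (hs : Bornology.IsBounded s) (ht : IsCompact t) (hne : t.Nonempty) {x : α} (hx : x ∈ s) :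
    ∃ y ∈ t, dist x y ≤ hausdorffDist s t := by
  obtain ⟨y, hy, hxy⟩ := ht.exists_infDist_eq_dist hne x
  refine ⟨y, hy, hxy ▸ infDist_le_hausdorffDist_of_mem hx ?_⟩
  exact hausdorffEDist_ne_top_of_nonempty_of_bounded ⟨x, hx⟩ hne hs ht.isBounded

section NearIsometry

variable {X Y Z : Type*} [MetricSpace X] [MetricSpace Z] {Φ : X → Z} {Ψ : Y → Z} {h : ℝ}

theorem Isometry.abs_dist_sub_dist_le [MetricSpace Y] (hΦ : Isometry Φ) (hΨ : Isometry Ψ)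
    {f : X → Y} (hf : ∀ x, dist (Φ x) (Ψ (f x)) ≤ h) (x x' : X) :
    |dist (f x) (f x') - dist x x'| ≤ 2 * h := by
  rw [← hΦ.dist_eq, ← hΨ.dist_eq, abs_sub_le_iff]
  have h₁ := dist_triangle4 (Ψ (f x)) (Φ x) (Φ x') (Ψ (f x'))
  have h₂ := dist_triangle4 (Φ x) (Ψ (f x)) (Ψ (f x')) (Φ x')
  have := hf x; have := hf x'
  have := dist_comm (Ψ (f x)) (Φ x); have := dist_comm (Ψ (f x')) (Φ x')
  constructor <;> linarith

theorem Isometry.dist_comp_le_two_mul (hΦ : Isometry Φ) {f : X → Y} {g : Y → X}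
    (hf : ∀ x, dist (Φ x) (Ψ (f x)) ≤ h) (hg : ∀ y, dist (Φ (g y)) (Ψ y) ≤ h) (x : X) :
    dist x (g (f x)) ≤ 2 * h := by
  rw [← hΦ.dist_eq]
  linarith [dist_triangle_right (Φ x) (Φ (g (f x))) (Ψ (f x)), hf x, hg (f x)]

end NearIsometry

namespace GromovHausdorff

variable {X Y : Type*} [MetricSpace X] [CompactSpace X] [Nonempty X]
  [MetricSpace Y] [CompactSpace Y] [Nonempty Y]

theorem ghDist_nonneg : 0 ≤ ghDist X Y := dist_nonneg

theorem ghDist_comm : ghDist X Y = ghDist Y X := dist_comm _ _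

theorem ghDist_le_of_forall_exists_dist_le {Z : Type*} [MetricSpace Z] {Φ : X → Z} {Ψ : Y → Z}
    (hΦ : Isometry Φ) (hΨ : Isometry Ψ) {h : ℝ} (hX : ∀ x, ∃ y, dist (Φ x) (Ψ y) ≤ h)
    (hY : ∀ y, ∃ x, dist (Φ x) (Ψ y) ≤ h) : ghDist X Y ≤ h := by
  obtain ⟨y₀, hy₀⟩ := hX (Classical.arbitrary X)
  refine (ghDist_le_hausdorffDist hΦ hΨ).trans
    (hausdorffDist_le_of_mem_dist (dist_nonneg.trans hy₀) ?_ ?_)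
  · rintro _ ⟨x, rfl⟩
    obtain ⟨y, hy⟩ := hX x
    exact ⟨_, mem_range_self y, hy⟩
  · rintro _ ⟨y, rfl⟩
    obtain ⟨x, hx⟩ := hY y
    exact ⟨_, mem_range_self x, (dist_comm _ _).trans_le hx⟩

theorem exists_dist_optimalGHInjl_le (x : X) :
    ∃ y : Y, dist (optimalGHInjl X Y x) (optimalGHInjr X Y y) ≤ ghDist X Y := by
  obtain ⟨_, ⟨y, rfl⟩, hy⟩ := (isCompact_range (isometry_optimalGHInjr X Y).continuous
    ).exists_dist_le_hausdorffDist (isCompact_range (isometry_optimalGHInjl X Y).continuous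
    ).isBounded (range_nonempty _) (mem_range_self x)
  exact ⟨y, hy.trans_eq hausdorffDist_optimal⟩

theorem exists_dist_optimalGHInjr_le (y : Y) :
    ∃ x : X, dist (optimalGHInjl X Y x) (optimalGHInjr X Y y) ≤ ghDist X Y := by
  obtain ⟨_, ⟨x, rfl⟩, hx⟩ := (isCompact_range (isometry_optimalGHInjl X Y).continuous
    ).exists_dist_le_hausdorffDist (isCompact_range (isometry_optimalGHInjr X Y).continuous
    ).isBounded (range_nonempty _) (mem_range_self y)
  rw [hausdorffDist_comm, hausdorffDist_optimal, dist_comm] at hx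
  exact ⟨x, hx⟩

theorem dist_le_two_mul_ghDist [Subsingleton Y] (x x' : X) : dist x x' ≤ 2 * ghDist X Y := by
  obtain ⟨y⟩ := ‹Nonempty Y›
  have hf : ∀ x, dist (optimalGHInjl X Y x) (optimalGHInjr X Y y) ≤ ghDist X Y := fun x => by
    obtain ⟨y', hy'⟩ := exists_dist_optimalGHInjl_le (Y := Y) x
    rwa [Subsingleton.elim y' y] at hy'
  simpa using (abs_le.1 ((isometry_optimalGHInjl X Y).abs_dist_sub_dist_le
    (isometry_optimalGHInjr X Y) hf x x')).1

theorem diam_univ_rep_toGHSpace :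
    diam (univ : Set (toGHSpace X).Rep) = diam (univ : Set X) := by
  obtain ⟨e⟩ := toGHSpace_eq_toGHSpace_iff_isometryEquiv.1 (toGHSpace X).toGHSpace_rep
  exact e.diam_univ

end GromovHausdorff

theorem Equiv.Perm.apply_eq_and_apply_eq_of_max_compat {ι : Type*} [LinearOrder ι]
    {σ : Equiv.Perm ι} (hσ : ∀ i j, i ≠ j → max (σ i) (σ j) = max i j) {i a : ι}
    (hi : σ i ≠ i) (ha : a < i) : σ i = a ∧ σ a = i := by
  have below : ∀ b < i, σ b = i := fun b hb => by
    have := hσ i b hb.ne'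
    rw [max_eq_left hb.le, max_eq_iff] at this
    tauto
  have hle : σ i ≤ i := by
    have := hσ i a ha.ne'
    rw [max_eq_left ha.le] at this
    exact (le_max_left _ _).trans_eq this
  exact ⟨σ.injective ((below _ (lt_of_le_of_ne hle hi)).trans (below a ha).symm), below a ha⟩

structure BlockScale (ι : Type*) [LinearOrder ι] where
  toFun : ι → ℝ
  monotone' : Monotone toFun
  pos' : ∀ i, 0 < toFun i

namespace BlockScale

variable {ι : Type*} [LinearOrder ι]

instance : CoeFun (BlockScale ι) fun _ => ι → ℝ := ⟨toFun⟩

variable (c : BlockScale ι)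

theorem monotone : Monotone c := c.monotone'

theorem pos (i : ι) : 0 < c i := c.pos' i

theorem eq_of_abs_sub_lt {δ : ℝ} (hgap : ∀ i j, i < j → c i + δ ≤ c j) {i j : ι}
    (h : |c i - c j| < δ) : i = j := by
  rw [abs_lt] at h
  rcases lt_trichotomy i j with hij | rfl | hij
  · linarith [hgap i j hij]
  · rfl
  · linarith [hgap j i hij]

end BlockScale

/-- The scale `c` only enters through the metric. -/
structure BlockSum {ι : Type*} [LinearOrder ι] (E : ι → Type*) (c : BlockScale ι) where
  block : ι
  point : E block

namespace BlockSum

variable {ι : Type*} [LinearOrder ι] {E F : ι → Type*} {c : BlockScale ι}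

theorem exists_eq_mk_of_block_eq {z : BlockSum E c} {i : ι} (h : z.block = i) :
    ∃ x : E i, z = ⟨i, x⟩ := by
  obtain ⟨j, x⟩ := z
  subst h
  exact ⟨x, rfl⟩

def map (f : ∀ i, E i → F i) (z : BlockSum E c) : BlockSum F c :=
  ⟨z.block, f _ z.point⟩

variable [∀ i, MetricSpace (E i)] [∀ i, MetricSpace (F i)]

/-- Inside a block the distance is truncated at `2 * c i`, which makes the triangle inequality
hold whatever the diameters of the blocks. -/
noncomputable instance : Dist (BlockSum E c) where
  dist
  | ⟨i, x⟩, ⟨j, y⟩ => if h : i = j then min (dist (h ▸ x) y) (2 * c i) else c (max i j)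

theorem dist_mk_mk (i : ι) (x y : E i) :
    dist (⟨i, x⟩ : BlockSum E c) ⟨i, y⟩ = min (dist x y) (2 * c i) :=
  dif_pos rfl

theorem dist_of_block_ne {z w : BlockSum E c} (h : z.block ≠ w.block) :
    dist z w = c (max z.block w.block) :=
  dif_neg h

theorem dist_mk_mk_le (i : ι) (x y : E i) :
    dist (⟨i, x⟩ : BlockSum E c) ⟨i, y⟩ ≤ dist x y :=
  (dist_mk_mk i x y).trans_le (min_le_left _ _)

noncomputable instance : MetricSpace (BlockSum E c) where
  dist_self := fun ⟨i, x⟩ => by simp [dist_mk_mk, (c.pos i).le]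
  dist_comm := by
    rintro ⟨i, x⟩ ⟨j, y⟩
    rcases eq_or_ne i j with rfl | h
    · simp only [dist_mk_mk, dist_comm]
    · rw [dist_of_block_ne h, dist_of_block_ne h.symm, max_comm]
  dist_triangle := by
    rintro ⟨i, x⟩ ⟨j, y⟩ ⟨k, z⟩
    have hc := c.monotone
    have hpos := c.pos
    have hmin : ∀ l (u v : E l), 0 ≤ min (dist u v) (2 * c l) := fun l u v =>
      le_min dist_nonneg (by linarith [hpos l])
    rcases eq_or_ne i j with rfl | hij
    · rcases eq_or_ne i k with rfl | hik
      · simp only [dist_mk_mk]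
        exact min_le_min_add_min (dist_triangle x y z) dist_nonneg dist_nonneg
          (by linarith [hpos i])
      · rw [dist_of_block_ne (w := ⟨k, z⟩) hik, dist_of_block_ne (w := ⟨k, z⟩) hik,
          dist_mk_mk]
        linarith [hmin i x y]
    rcases eq_or_ne j k with rfl | hjk
    · rw [dist_of_block_ne (w := ⟨j, z⟩) hij, dist_of_block_ne (w := ⟨j, y⟩) hij,
        dist_mk_mk]
      linarith [hmin j y z]
    rw [dist_of_block_ne (w := ⟨j, y⟩) hij,
      dist_of_block_ne (z := ⟨j, y⟩) (w := ⟨k, z⟩) hjk]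
    rcases eq_or_ne i k with rfl | hik
    · rw [dist_mk_mk, max_comm j i]
      linarith [min_le_right (dist x z) (2 * c i), hc (le_max_left i j)]
    rw [dist_of_block_ne (w := ⟨k, z⟩) hik]
    calc c (max i k) ≤ c (max (max i j) (max j k)) :=
          hc (max_le (le_max_of_le_left (le_max_left _ _)) (le_max_of_le_right (le_max_right _ _)))
      _ = max (c (max i j)) (c (max j k)) := hc.map_max
      _ ≤ c (max i j) + c (max j k) := max_le_add_of_nonneg (hpos _).le (hpos _).le
  eq_of_dist_eq_zero := by
    rintro ⟨i, x⟩ ⟨j, y⟩ h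
    rcases eq_or_ne i j with rfl | hij
    · rw [dist_mk_mk, min_eq_iff] at h
      rcases h with ⟨h, -⟩ | ⟨h, -⟩
      · rw [dist_eq_zero.1 h]
      · linarith [c.pos i]
    · rw [dist_of_block_ne (w := ⟨j, y⟩) hij] at h
      exact absurd h (c.pos _).ne'

theorem isometry_mk {i : ι} (hE : ∀ x y : E i, dist x y ≤ 2 * c i) :
    Isometry (mk i : E i → BlockSum E c) :=
  Isometry.of_dist_eq fun x y => (dist_mk_mk i x y).trans (min_eq_left (hE x y))

theorem lipschitzWith_mk (i : ι) : LipschitzWith 1 (mk i : E i → BlockSum E c) :=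
  LipschitzWith.of_dist_le_mul fun x y => by simpa using dist_mk_mk_le i x y

theorem isometry_map {f : ∀ i, E i → F i} (hf : ∀ i, Isometry (f i)) :
    Isometry (map f : BlockSum E c → BlockSum F c) := by
  refine Isometry.of_dist_eq ?_
  rintro ⟨i, x⟩ ⟨j, y⟩
  rcases eq_or_ne i j with rfl | hij
  · simp only [map, dist_mk_mk, (hf i).dist_eq]
  · exact (dist_of_block_ne hij).trans
      (dist_of_block_ne (z := ⟨i, x⟩) (w := ⟨j, y⟩) hij).symm

theorem dist_le_max_block (hE : ∀ i (x y : E i), dist x y ≤ c i) (z w : BlockSum E c) :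
    dist z w ≤ c (max z.block w.block) := by
  obtain ⟨i, x⟩ := z
  obtain ⟨j, y⟩ := w
  rcases eq_or_ne i j with rfl | hij
  · simpa using (dist_mk_mk_le i x y).trans (hE i x y)
  · exact (dist_of_block_ne hij).le

instance [Nonempty ι] [∀ i, Nonempty (E i)] : Nonempty (BlockSum E c) :=
  ⟨⟨Classical.arbitrary ι, Classical.arbitrary _⟩⟩

instance [Finite ι] [∀ i, CompactSpace (E i)] : CompactSpace (BlockSum E c) := by
  refine ⟨?_⟩
  have : (univ : Set (BlockSum E c)) = ⋃ i, range (mk i) := by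
    ext ⟨i, x⟩
    simp only [mem_univ, mem_iUnion, mem_range, true_iff]
    exact ⟨i, x, rfl⟩
  rw [this]
  exact isCompact_iUnion fun i => isCompact_range (lipschitzWith_mk i).continuous

variable {δ : ℝ}

theorem block_eq_of_dist_lt (hc : ∀ i, δ ≤ c i) (hgap : ∀ i j, i < j → c i + δ ≤ c j)
    {z w : BlockSum E c} (h : dist z w < 2 * δ) :
    z.block = w.block := by
  by_contra hne
  rw [dist_of_block_ne hne] at h
  linarith [hgap _ _ (min_lt_max.2 hne), hc (min z.block w.block)]

theorem dist_le_of_block_eq (hE : ∀ i (x y : E i), dist x y ≤ δ) {z w : BlockSum E c}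
    (h : z.block = w.block) : dist z w ≤ δ := by
  obtain ⟨i, x⟩ := z
  obtain ⟨j, y⟩ := w
  obtain rfl : i = j := h
  exact (dist_mk_mk_le i x y).trans (hE i x y)

theorem exists_block_map [∀ i, Nonempty (E i)] (hc : ∀ i, δ ≤ c i)
    (hgap : ∀ i j, i < j → c i + δ ≤ c j) (hE : ∀ i (x y : E i), dist x y ≤ δ)
    (hF : ∀ i (x y : F i), dist x y ≤ δ) (f : BlockSum E c → BlockSum F c)
    (hf : ∀ z w, |dist (f z) (f w) - dist z w| < δ) :
    ∃ σ : ι → ι, (∀ z, (f z).block = σ z.block) ∧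
      ∀ i j, i ≠ j → σ i ≠ σ j ∧ max (σ i) (σ j) = max i j := by
  have same : ∀ z w : BlockSum E c, z.block = w.block → (f z).block = (f w).block :=
    fun z w h => block_eq_of_dist_lt hc hgap
      (by linarith [(abs_lt.1 (hf z w)).2, dist_le_of_block_eq hE h])
  refine ⟨fun i => (f ⟨i, Classical.arbitrary _⟩).block, fun z => same _ _ rfl,
    fun i j hij => ?_⟩
  set z : BlockSum E c := ⟨i, Classical.arbitrary _⟩
  set w : BlockSum E c := ⟨j, Classical.arbitrary _⟩
  have hzw : dist z w = c (max i j) := dist_of_block_ne hij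
  have hfar : 2 * δ ≤ c (max i j) := by
    linarith [hgap _ _ (min_lt_max.2 hij), hc (min i j)]
  have hne : (f z).block ≠ (f w).block := fun h => by
    linarith [(abs_lt.1 (hf z w)).1, dist_le_of_block_eq hF h]
  refine ⟨hne, c.eq_of_abs_sub_lt hgap ?_⟩
  rw [← dist_of_block_ne hne, ← hzw]
  exact hf z w

variable [Finite ι] [Nonempty ι] [∀ i, CompactSpace (E i)] [∀ i, Nonempty (E i)]
  [∀ i, CompactSpace (F i)] [∀ i, Nonempty (F i)]

/-- The two block sums are glued inside the block sum of the optimal couplings of `E i` and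
`F i`. -/
theorem ghDist_le {D : ℝ} (hD : ∀ i, ghDist (E i) (F i) ≤ D) :
    ghDist (BlockSum E c) (BlockSum F c) ≤ D := by
  let W i := OptimalGHCoupling (E i) (F i)
  have hΦ : Isometry (map (fun i => optimalGHInjl (E i) (F i)) : BlockSum E c → BlockSum W c) :=
    isometry_map fun i => isometry_optimalGHInjl _ _
  have hΨ : Isometry (map (fun i => optimalGHInjr (E i) (F i)) : BlockSum F c → BlockSum W c) :=
    isometry_map fun i => isometry_optimalGHInjr _ _
  refine ghDist_le_of_forall_exists_dist_le hΦ hΨ (fun ⟨i, x⟩ => ?_) fun ⟨i, y⟩ => ?_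
  · obtain ⟨y, hy⟩ := exists_dist_optimalGHInjl_le (Y := F i) x
    exact ⟨⟨i, y⟩, (dist_mk_mk_le _ _ _).trans (hy.trans (hD i))⟩
  · obtain ⟨x, hx⟩ := exists_dist_optimalGHInjr_le (X := E i) y
    exact ⟨⟨i, x⟩, (dist_mk_mk_le _ _ _).trans (hx.trans (hD i))⟩

/-- The nearest-point maps `f` and `g` of an optimal coupling of the two block sums are
`2h`-isometries and almost inverse to each other, so the block maps they induce are inverse
permutations, and `f`, `g` restrict to nearest-point maps between matched blocks. -/
theorem exists_perm_ghDist_le (hc : ∀ i, δ ≤ c i) (hgap : ∀ i j, i < j → c i + δ ≤ c j)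
    (hE : ∀ i (x y : E i), dist x y ≤ δ) (hF : ∀ i (x y : F i), dist x y ≤ δ)
    (hh : 2 * ghDist (BlockSum E c) (BlockSum F c) < δ) :
    ∃ σ : Equiv.Perm ι, (∀ i j, i ≠ j → max (σ i) (σ j) = max i j) ∧
      ∀ i, ghDist (E i) (F (σ i)) ≤ ghDist (BlockSum E c) (BlockSum F c) := by
  set h := ghDist (BlockSum E c) (BlockSum F c)
  have hΦ := isometry_optimalGHInjl (BlockSum E c) (BlockSum F c)
  have hΨ := isometry_optimalGHInjr (BlockSum E c) (BlockSum F c)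
  choose f hf using exists_dist_optimalGHInjl_le (X := BlockSum E c) (Y := BlockSum F c)
  choose g hg using exists_dist_optimalGHInjr_le (X := BlockSum E c) (Y := BlockSum F c)
  have hf' : ∀ z, dist (optimalGHInjr _ _ (f z)) (optimalGHInjl _ _ z) ≤ h := fun z =>
    (dist_comm _ _).trans_le (hf z)
  have hg' : ∀ w, dist (optimalGHInjr _ _ w) (optimalGHInjl _ _ (g w)) ≤ h := fun w =>
    (dist_comm _ _).trans_le (hg w)
  have h2δ : 2 * h < 2 * δ := by linarith [ghDist_nonneg (X := BlockSum E c) (Y := BlockSum F c)]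
  obtain ⟨σ, hσf, hσ⟩ := exists_block_map hc hgap hE hF f fun z w =>
    (hΦ.abs_dist_sub_dist_le hΨ hf z w).trans_lt hh
  obtain ⟨τ, hτg, -⟩ := exists_block_map hc hgap hF hE g fun z w =>
    (hΨ.abs_dist_sub_dist_le hΦ hg' z w).trans_lt hh
  have hτσ : ∀ i, τ (σ i) = i := fun i => by
    have := block_eq_of_dist_lt hc hgap
      ((hΦ.dist_comp_le_two_mul hf hg ⟨i, Classical.arbitrary _⟩).trans_lt h2δ)
    rw [hτg, hσf] at this
    exact this.symm
  have hστ : ∀ j, σ (τ j) = j := fun j => by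
    have := block_eq_of_dist_lt hc hgap
      ((hΨ.dist_comp_le_two_mul hg' hf' ⟨j, Classical.arbitrary _⟩).trans_lt h2δ)
    rw [hσf, hτg] at this
    exact this.symm
  refine ⟨⟨σ, τ, hτσ, hστ⟩, fun i j hij => (hσ i j hij).2, fun i => ?_⟩
  have hmkE : Isometry (mk i : E i → BlockSum E c) :=
    isometry_mk fun x y => (hE i x y).trans (by linarith [hc i, c.pos i])
  have hmkF : Isometry (mk (σ i) : F (σ i) → BlockSum F c) :=
    isometry_mk fun x y => (hF _ x y).trans (by linarith [hc (σ i), c.pos (σ i)])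
  refine ghDist_le_of_forall_exists_dist_le (hΦ.comp hmkE) (hΨ.comp hmkF) (fun x => ?_)
    fun y => ?_
  · obtain ⟨y, hy⟩ := exists_eq_mk_of_block_eq (hσf ⟨i, x⟩)
    exact ⟨y, (hf ⟨i, x⟩).trans_eq' (by rw [hy]; rfl)⟩
  · obtain ⟨x, hx⟩ := exists_eq_mk_of_block_eq ((hτg ⟨σ i, y⟩).trans (hτσ i))
    exact ⟨x, (hg ⟨σ i, y⟩).trans_eq' (by rw [hx]; rfl)⟩

end BlockSum

/-- `X` and `Y` are the two blocks of a block sum at constant mutual distance `D / 2 + ε`. -/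
theorem GromovHausdorff.ghDist_le_half {X Y : Type u} [MetricSpace X] [CompactSpace X]
    [Nonempty X] [MetricSpace Y] [CompactSpace Y] [Nonempty Y] {D : ℝ}
    (hX : ∀ x x' : X, dist x x' ≤ D) (hY : ∀ y y' : Y, dist y y' ≤ D) :
    ghDist X Y ≤ D / 2 := by
  refine le_of_forall_pos_le_add fun ε hε => ?_
  have hD : 0 ≤ D := dist_nonneg.trans (hX (Classical.arbitrary X) (Classical.arbitrary X))
  let c : BlockScale Bool := ⟨fun _ => D / 2 + ε, monotone_const, fun _ => by positivity⟩
  let _ : ∀ b, MetricSpace (cond b Y X) := fun | true => ‹_› | false => ‹_›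
  have hl : Isometry fun x : X => (⟨false, x⟩ : BlockSum (fun b => cond b Y X) c) :=
    BlockSum.isometry_mk (E := fun b => cond b Y X) (c := c) (i := false) fun x x' =>
      (hX x x').trans (by change D ≤ 2 * (D / 2 + ε); linarith)
  have hr : Isometry fun y : Y => (⟨true, y⟩ : BlockSum (fun b => cond b Y X) c) :=
    BlockSum.isometry_mk (E := fun b => cond b Y X) (c := c) (i := true) fun y y' =>
      (hY y y').trans (by change D ≤ 2 * (D / 2 + ε); linarith)
  exact ghDist_le_of_forall_exists_dist_le hl hr
    (fun _ => ⟨Classical.arbitrary Y, (BlockSum.dist_of_block_ne Bool.false_ne_true).le⟩)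
    (fun _ => ⟨Classical.arbitrary X, (BlockSum.dist_of_block_ne Bool.false_ne_true).le⟩)

def botExtend {α : Type*} (G : α → Type u) : WithBot α → Type u
  | ⊥ => PUnit
  | (a : α) => G a

namespace botExtend

variable {α : Type*} (G : α → Type u)

instance [∀ a, MetricSpace (G a)] : ∀ i, MetricSpace (botExtend G i)
  | ⊥ => inferInstanceAs (MetricSpace PUnit)
  | (a : α) => inferInstanceAs (MetricSpace (G a))

instance [∀ a, MetricSpace (G a)] [∀ a, CompactSpace (G a)] :
    ∀ i, CompactSpace (botExtend G i)
  | ⊥ => inferInstanceAs (CompactSpace PUnit)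
  | (a : α) => inferInstanceAs (CompactSpace (G a))

instance [∀ a, Nonempty (G a)] : ∀ i, Nonempty (botExtend G i)
  | ⊥ => inferInstanceAs (Nonempty PUnit)
  | (a : α) => inferInstanceAs (Nonempty (G a))

instance : Subsingleton (botExtend G ⊥) := inferInstanceAs (Subsingleton PUnit)

theorem dist_le [∀ a, MetricSpace (G a)] {r : ℝ} (hr : 0 ≤ r)
    (hG : ∀ a (x y : G a), dist x y ≤ r) : ∀ i (x y : botExtend G i), dist x y ≤ r
  | ⊥, x, y => by rw [Subsingleton.elim x y, dist_self]; exact hr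
  | (a : α), x, y => hG a x y

end botExtend

/-- The level of the marker block `⊥` is never a distance; any value in `[r, (3n + 1) r]`
would do. -/
def chainLevel (r : ℝ) (n : ℕ) : WithBot (Fin n) → ℝ
  | ⊥ => r
  | (k : Fin n) => r * (3 * n + 2 * k + 2)

section Chain

variable {r : ℝ} {n : ℕ}

theorem chainLevel_add_le (hr : 0 ≤ r) {i j : WithBot (Fin n)} (h : i < j) :
    chainLevel r n i + r ≤ chainLevel r n j := by
  induction j using WithBot.recBotCoe with
  | bot => exact absurd h not_lt_bot
  | coe l =>
    have hl : (0 : ℝ) ≤ l := Nat.cast_nonneg _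
    induction i using WithBot.recBotCoe with
    | bot => simp only [chainLevel]; nlinarith
    | coe k =>
      have hkl : (k : ℝ) + 1 ≤ l := by exact_mod_cast WithBot.coe_lt_coe.1 h
      simp only [chainLevel]; nlinarith

theorem le_chainLevel (hr : 0 ≤ r) (i : WithBot (Fin n)) : r ≤ chainLevel r n i := by
  induction i using WithBot.recBotCoe with
  | bot => exact le_rfl
  | coe k => simp only [chainLevel]; nlinarith [(Nat.cast_nonneg k : (0 : ℝ) ≤ k)]

theorem chainLevel_le (hr : 0 ≤ r) (hn : 1 ≤ n) (i : WithBot (Fin n)) :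
    chainLevel r n i ≤ 5 * r * n := by
  have hn' : (1 : ℝ) ≤ n := by exact_mod_cast hn
  induction i using WithBot.recBotCoe with
  | bot => simp only [chainLevel]; nlinarith
  | coe k =>
    have hk : (k : ℝ) + 1 ≤ n := by exact_mod_cast k.isLt
    simp only [chainLevel]; nlinarith

end Chain

def chainScale (r : ℝ) (hr : 0 < r) (n : ℕ) : BlockScale (WithBot (Fin n)) where
  toFun := chainLevel r n
  monotone' i j h := h.eq_or_lt.elim (fun h => h ▸ le_rfl) fun h => by
    linarith [chainLevel_add_le hr.le h]
  pos' i := hr.trans_le (le_chainLevel hr.le i)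

abbrev ChainSpace (r : ℝ) (hr : 0 < r) {n : ℕ} (G : Fin n → Type u) : Type u :=
  BlockSum (botExtend G) (chainScale r hr n)

section ChainSpace

variable {r : ℝ} {n : ℕ} (hr : 0 < r) {G H : Fin n → Type u}
  [∀ k, MetricSpace (G k)] [∀ k, CompactSpace (G k)] [∀ k, Nonempty (G k)]
  [∀ k, MetricSpace (H k)] [∀ k, CompactSpace (H k)] [∀ k, Nonempty (H k)]

theorem diam_univ_chainSpace (hG : ∀ k (x y : G k), dist x y ≤ r) :
    diam (univ : Set (ChainSpace r hr G)) = 5 * r * n := by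
  rcases Nat.eq_zero_or_pos n with rfl | hn
  · rw [Nat.cast_zero, mul_zero, diam_subsingleton]
    rintro ⟨i, x⟩ - ⟨j, y⟩ -
    induction i using WithBot.recBotCoe with
    | coe k => exact k.elim0
    | bot =>
      induction j using WithBot.recBotCoe with
      | coe k => exact k.elim0
      | bot => rfl
  obtain ⟨m, rfl⟩ : ∃ m, n = m + 1 := ⟨n - 1, by omega⟩
  refine le_antisymm (diam_le_of_forall_dist_le (by positivity) fun z _ w _ => ?_) ?_
  · exact (BlockSum.dist_le_max_block (fun i x y => (botExtend.dist_le G hr.le hG i x y).trans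
      (le_chainLevel hr.le i)) z w).trans (chainLevel_le hr.le hn _)
  · let z : ChainSpace r hr G := ⟨⊥, PUnit.unit⟩
    let w : ChainSpace r hr G :=
      ⟨(Fin.last m : WithBot (Fin (m + 1))), Classical.arbitrary (G _)⟩
    calc 5 * r * ↑(m + 1) = dist z w := by
          rw [BlockSum.dist_of_block_ne (WithBot.bot_lt_coe _).ne]
          simp only [z, w, chainScale, max_eq_right bot_le, chainLevel, Fin.val_last]
          push_cast
          ring
      _ ≤ diam univ := dist_le_diam_of_mem isCompact_univ.isBounded (mem_univ _) (mem_univ _)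

theorem ghDist_chainSpace (hG : ∀ k (x y : G k), dist x y ≤ r)
    (hH : ∀ k (x y : H k), dist x y ≤ r) :
    ghDist (ChainSpace r hr G) (ChainSpace r hr H) = ⨆ k, ghDist (G k) (H k) := by
  set h := ghDist (ChainSpace r hr G) (ChainSpace r hr H)
  refine le_antisymm (BlockSum.ghDist_le fun i => ?_) (Real.iSup_le (fun k => ?_) ghDist_nonneg)
  · induction i using WithBot.recBotCoe with
    | bot => exact (dist_self _).trans_le (Real.iSup_nonneg fun _ => ghDist_nonneg)
    | coe k => exact le_ciSup (f := fun k => ghDist (G k) (H k)) (finite_range _).bddAbove k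
  rcases le_or_gt r (2 * h) with hh | hh
  · exact (ghDist_le_half (hG k) (hH k)).trans (by linarith)
  obtain ⟨σ, hσ, hσh⟩ := BlockSum.exists_perm_ghDist_le (le_chainLevel hr.le)
    (fun i j => chainLevel_add_le hr.le) (botExtend.dist_le G hr.le hG)
    (botExtend.dist_le H hr.le hH) hh
  by_cases hk : σ k = k
  · have hGH := hσh k
    rw [hk] at hGH
    exact hGH
  -- Otherwise `σ` swaps `k` with the marker block `⊥`: `G k` and `H k` are `h`-close to a point.
  obtain ⟨h₁, h₂⟩ := σ.apply_eq_and_apply_eq_of_max_compat hσ hk (WithBot.bot_lt_coe k)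
  have hGk := hσh k
  rw [h₁] at hGk
  have hHk := hσh ⊥
  rw [h₂, ghDist_comm] at hHk
  refine (ghDist_le_half (X := G k) (Y := H k) (D := 2 * h) (fun x x' => ?_)
    (fun y y' => ?_)).trans (by linarith)
  · exact (dist_le_two_mul_ghDist (X := botExtend G k) (Y := botExtend H ⊥) x x').trans
      (by linarith)
  · exact (dist_le_two_mul_ghDist (X := botExtend H k) (Y := botExtend G ⊥) y y').trans
      (by linarith)

end ChainSpace

theorem linfty_power_embeds_into_sphere (r : ℝ) (hr : 0 < r) (n : ℕ) :
    ∃ S : (Fin n → {Z : GHSpace // Metric.diam (Set.univ : Set Z.Rep) ≤ r}) →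
        {Z : GHSpace // Metric.diam (Set.univ : Set Z.Rep) = 5 * r * n},
      ∀ X Y : Fin n → {Z : GHSpace // Metric.diam (Set.univ : Set Z.Rep) ≤ r},
        dist (S X : GHSpace) (S Y : GHSpace) =
          ⨆ k : Fin n, dist (X k : GHSpace) (Y k : GHSpace) := by
  have hdist (X : Fin n → {Z : GHSpace // diam (univ : Set Z.Rep) ≤ r}) (k : Fin n)
      (x y : (X k : GHSpace).Rep) : dist x y ≤ r :=
    (dist_le_diam_of_mem isCompact_univ.isBounded (mem_univ x) (mem_univ y)).trans (X k).2
  refine ⟨fun X => ⟨toGHSpace (ChainSpace r hr fun k => (X k : GHSpace).Rep),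
    by rw [diam_univ_rep_toGHSpace, diam_univ_chainSpace hr (hdist X)]⟩, fun X Y => ?_⟩
  exact (ghDist_chainSpace hr (hdist X) (hdist Y)).trans
    (iSup_congr fun k => (dist_ghDist _ _).symm)
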